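/- Let $\Bbbk$ be a field of characteristic 0, $q \in \Bbbk$ a primitive 5th root of unity, $q_{11} = q$, $q_{12} = q^2$, $q_{21} = q$, $q_{22} = q^2$, and fix scalars $\lambda_1, \lambda_2 \in \Bbbk$. Let $F_1$ be the $\Bbbk$-algebra generated by $x_1, x_2, y_1, y_2$ with relations: $x_i y_j = q_{ij}\, y_j x_i$ for $i, j \in \{1,2\}$; $x_{1112} = 0$, $x_{221} = 0$; $y_{1112} = \lambda_1$, $y_{221} = \lambda_2$. Set $d_i = y_i + x_i$ for $i = 1, 2$. Then in $F_1$: $d_1^{\,5} = y_1^{\,5} + x_1^{\,5}$ and $d_2^{\,5} = y_2^{\,5} + x_2^{\,5}$. -/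
import Mathlib


/-- Braided commutator `u * v - c • (v * u)`. -/
def brc {k R : Type*} [CommRing k] [Ring R] [Algebra k R] (c : k) (u v : R) : R :=
  u * v - c • (v * u)

section BraidedWords

variable {k R : Type*} [CommRing k] [Ring R] [Algebra k R]

/-- `u₁₂ = u₁u₂ - q₁₂ u₂u₁`. -/
def w12 (q12 : k) (u1 u2 : R) : R := brc q12 u1 u2

/-- `u₁₁₂ = u₁u₁₂ - q₁₁q₁₂ u₁₂u₁`. -/
def w112 (q11 q12 : k) (u1 u2 : R) : R := brc (q11 * q12) u1 (w12 q12 u1 u2)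

/-- `u₁₁₁₂ = u₁u₁₁₂ - q₁₁²q₁₂ u₁₁₂u₁`. -/
def w1112 (q11 q12 : k) (u1 u2 : R) : R := brc (q11 ^ 2 * q12) u1 (w112 q11 q12 u1 u2)

/-- `u₂₁ = u₂u₁ - q₂₁ u₁u₂`. -/
def w21 (q21 : k) (u1 u2 : R) : R := brc q21 u2 u1

/-- `u₂₂₁ = u₂u₂₁ - q₂₁q₂₂ u₂₁u₂`. -/
def w221 (q21 q22 : k) (u1 u2 : R) : R := brc (q21 * q22) u2 (w21 q21 u1 u2)

end BraidedWords

lemma key {k R : Type*} [CommRing k] [Ring R] [Algebra k R]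
    (q : k) (x y : R) (h : x * y = q • (y * x))
    (hS : (1:k) + q + q^2 + q^3 + q^4 = 0) :
    (y + x) ^ 5 = y ^ 5 + x ^ 5 := by
  have hx : ∀ a : ℕ, x * y ^ a = q ^ a • (y ^ a * x) := by
    intro a
    induction a with
    | zero => simp
    | succ n ih =>
      calc x * y ^ (n+1) = (x * y) * y ^ n := by rw [pow_succ', ← mul_assoc]
        _ = q • (y * (x * y ^ n)) := by rw [h, smul_mul_assoc, mul_assoc]
        _ = q • (y * (q ^ n • (y ^ n * x))) := by rw [ih]
        _ = q ^ (n+1) • (y ^ (n+1) * x) := by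
            rw [mul_smul_comm, smul_smul, ← mul_assoc, ← pow_succ', ← pow_succ']
  have hm : ∀ a b : ℕ, x * (y ^ a * x ^ b) = q ^ a • (y ^ a * x ^ (b+1)) := by
    intro a b
    rw [← mul_assoc, hx, smul_mul_assoc, mul_assoc, ← pow_succ']
  have hy : ∀ a b : ℕ, y * (y ^ a * x ^ b) = y ^ (a+1) * x ^ b := by
    intro a b
    rw [← mul_assoc, ← pow_succ']
  have e1 : (y + x) ^ 1 = y ^ 1 * x ^ 0 + y ^ 0 * x ^ 1 := by simp
  have e2 : (y + x) ^ 2 = y ^ 2 * x ^ 0 + (1 + q) • (y ^ 1 * x ^ 1) + y ^ 0 * x ^ 2 := by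
    rw [pow_succ', e1]
    simp only [add_mul, mul_add, mul_smul_comm, hy, hm]
    module
  have e3 : (y + x) ^ 3 = y ^ 3 * x ^ 0 + (1 + q + q^2) • (y ^ 2 * x ^ 1)
      + (1 + q + q^2) • (y ^ 1 * x ^ 2) + y ^ 0 * x ^ 3 := by
    rw [pow_succ', e2]
    simp only [add_mul, mul_add, mul_smul_comm, hy, hm]
    module
  have e4 : (y + x) ^ 4 = y ^ 4 * x ^ 0 + (1 + q + q^2 + q^3) • (y ^ 3 * x ^ 1)
      + ((1 + q^2) * (1 + q + q^2)) • (y ^ 2 * x ^ 2)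
      + (1 + q + q^2 + q^3) • (y ^ 1 * x ^ 3) + y ^ 0 * x ^ 4 := by
    rw [pow_succ', e3]
    simp only [add_mul, mul_add, mul_smul_comm, hy, hm]
    module
  have e5 : (y + x) ^ 5 = y ^ 5 * x ^ 0
      + ((1:k) + q + q^2 + q^3 + q^4) • (y ^ 4 * x ^ 1)
      + ((1 + q^2) * ((1:k) + q + q^2 + q^3 + q^4)) • (y ^ 3 * x ^ 2)
      + ((1 + q^2) * ((1:k) + q + q^2 + q^3 + q^4)) • (y ^ 2 * x ^ 3)
      + ((1:k) + q + q^2 + q^3 + q^4) • (y ^ 1 * x ^ 4) + y ^ 0 * x ^ 5 := by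
    rw [pow_succ', e4]
    simp only [add_mul, mul_add, mul_smul_comm, hy, hm]
    module
  rw [e5, hS]
  simp

theorem stmt_17 {k : Type*} [Field k] [CharZero k]
    (q : k) (hq : IsPrimitiveRoot q 5)
    (lam1 lam2 : k)
    {R : Type*} [Ring R] [Algebra k R]
    (x1 x2 y1 y2 : R)
    -- commutation relations x_i y_j = q_{ij} y_j x_i with q₁₁ = q, q₁₂ = q², q₂₁ = q, q₂₂ = q²
    (h11 : x1 * y1 = q • (y1 * x1)) (h12 : x1 * y2 = (q ^ 2) • (y2 * x1))
    (h21 : x2 * y1 = q • (y1 * x2)) (h22 : x2 * y2 = (q ^ 2) • (y2 * x2))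
    -- relations on the x's
    (hx1112 : w1112 q (q ^ 2) x1 x2 = 0) (hx221 : w221 q (q ^ 2) x1 x2 = 0)
    -- relations on the y's
    (hy1112 : w1112 q (q ^ 2) y1 y2 = lam1 • (1 : R))
    (hy221 : w221 q (q ^ 2) y1 y2 = lam2 • (1 : R)) :
    (y1 + x1) ^ 5 = y1 ^ 5 + x1 ^ 5 ∧ (y2 + x2) ^ 5 = y2 ^ 5 + x2 ^ 5 := by
  have h5q : q ^ 5 = 1 := hq.pow_eq_one
  have hgs := hq.geom_sum_eq_zero (by norm_num)
  simp [Finset.sum_range_succ] at hgs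
  have hS : (1:k) + q + q^2 + q^3 + q^4 = 0 := by linear_combination hgs
  have hS2 : (1:k) + q^2 + (q^2)^2 + (q^2)^3 + (q^2)^4 = 0 := by
    linear_combination hS + (q + q^3) * h5q
  exact ⟨key q x1 y1 h11 hS, key (q^2) x2 y2 h22 hS2⟩
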